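/- Let p = (p₀,p₁,p₂,p₃) be a probability vector and let σ₀ = I, σ₁ = X, σ₂ = Y, σ₃ = Z be the identity and Pauli matrices. Define the switch Kraus operators K_{ij} = √(p_i p_j) (σ_i σ_j ⊗ |0⟩⟨0| + σ_j σ_i ⊗ |1⟩⟨1|) on ℂ²⊗ℂ². Then for every 2×2 density matrix ρ, Σ_{i,j=0}^{3} K_{ij}(ρ⊗|+⟩⟨+|)K_{ij}† = q₊ C₊(ρ) ⊗ |+⟩⟨+| + q₋ C₋(ρ) ⊗ |−⟩⟨−|, where q₋ = 2(p₁p₂ + p₂p₃ + p₃p₁), q₊ = 1 − q₋, q₊ C₊(ρ) = (p₀²+p₁²+p₂²+p₃²) ρ + 2p₀(p₁ XρX + p₂ YρY + p₃ ZρZ), and q₋ C₋(ρ) = 2p₁p₂ ZρZ + 2p₂p₃ XρX + 2p₁p₃ YρY. -/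
import Mathlib


open Matrix Kronecker
open scoped ComplexOrder

noncomputable def PX : Matrix (Fin 2) (Fin 2) ℂ := !![0, 1; 1, 0]
noncomputable def PY : Matrix (Fin 2) (Fin 2) ℂ := !![0, -Complex.I; Complex.I, 0]
noncomputable def PZ : Matrix (Fin 2) (Fin 2) ℂ := !![1, 0; 0, -1]
noncomputable def proj0 : Matrix (Fin 2) (Fin 2) ℂ := !![1, 0; 0, 0]
noncomputable def proj1 : Matrix (Fin 2) (Fin 2) ℂ := !![0, 0; 0, 1]
noncomputable def projPlus : Matrix (Fin 2) (Fin 2) ℂ := (1/2 : ℂ) • !![1, 1; 1, 1]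
noncomputable def projMinus : Matrix (Fin 2) (Fin 2) ℂ := (1/2 : ℂ) • !![1, -1; -1, 1]

/-- σ₀ = I, σ₁ = X, σ₂ = Y, σ₃ = Z. -/
noncomputable def pauli : Fin 4 → Matrix (Fin 2) (Fin 2) ℂ := ![1, PX, PY, PZ]

/-- Kraus operators of the quantum SWITCH of two copies of the Pauli channel E_p. -/
noncomputable def Kswitch (p : Fin 4 → ℝ) (i j : Fin 4) :
    Matrix (Fin 2 × Fin 2) (Fin 2 × Fin 2) ℂ :=
  ((Real.sqrt (p i * p j) : ℝ) : ℂ) •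
    ((pauli i * pauli j) ⊗ₖ proj0 + (pauli j * pauli i) ⊗ₖ proj1)


set_option maxHeartbeats 1000000 in
lemma kron4 (A B ρ : Matrix (Fin 2) (Fin 2) ℂ) :
    (A ⊗ₖ proj0 + B ⊗ₖ proj1) * (ρ ⊗ₖ projPlus) * (A ⊗ₖ proj0 + B ⊗ₖ proj1)ᴴ
      = (1/2 : ℂ) • ((A * ρ * Aᴴ) ⊗ₖ !![1, 0; 0, 0] + (A * ρ * Bᴴ) ⊗ₖ !![0, 1; 0, 0]
        + (B * ρ * Aᴴ) ⊗ₖ !![0, 0; 1, 0] + (B * ρ * Bᴴ) ⊗ₖ !![0, 0; 0, 1]) := by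
  ext ⟨a, b⟩ ⟨c, d⟩
  simp only [proj0, proj1, projPlus, Matrix.add_apply, Matrix.smul_apply,
    Matrix.mul_apply, Matrix.kroneckerMap_apply, Matrix.conjTranspose_apply,
    Fintype.sum_prod_type, Fin.sum_univ_two, smul_eq_mul]
  fin_cases b <;> fin_cases d <;>
    simp [Matrix.mul_apply, Fin.sum_univ_two, mul_comm, mul_assoc, mul_left_comm] <;>
    ring

set_option maxHeartbeats 2000000 in
/-- The switched Pauli channel with control |+⟩⟨+| decomposes as
q₊ C₊(ρ) ⊗ |+⟩⟨+| + q₋ C₋(ρ) ⊗ |−⟩⟨−|. -/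
theorem stmt2 (p : Fin 4 → ℝ) (hp : ∀ i, 0 ≤ p i) (hpsum : ∑ i, p i = 1)
    (ρ : Matrix (Fin 2) (Fin 2) ℂ) (hρ : ρ.PosSemidef) (htr : ρ.trace = 1) :
    ∑ i : Fin 4, ∑ j : Fin 4, Kswitch p i j * (ρ ⊗ₖ projPlus) * (Kswitch p i j)ᴴ
      = (((p 0 ^ 2 + p 1 ^ 2 + p 2 ^ 2 + p 3 ^ 2 : ℝ) : ℂ) • ρ
          + ((2 * p 0 * p 1 : ℝ) : ℂ) • (PX * ρ * PX)
          + ((2 * p 0 * p 2 : ℝ) : ℂ) • (PY * ρ * PY)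
          + ((2 * p 0 * p 3 : ℝ) : ℂ) • (PZ * ρ * PZ)) ⊗ₖ projPlus
        + (((2 * p 1 * p 2 : ℝ) : ℂ) • (PZ * ρ * PZ)
          + ((2 * p 2 * p 3 : ℝ) : ℂ) • (PX * ρ * PX)
          + ((2 * p 1 * p 3 : ℝ) : ℂ) • (PY * ρ * PY)) ⊗ₖ projMinus := by
  have hK : ∀ i j : Fin 4, Kswitch p i j * (ρ ⊗ₖ projPlus) * (Kswitch p i j)ᴴ
      = ((p i * p j : ℝ) : ℂ) •
          (((pauli i * pauli j) ⊗ₖ proj0 + (pauli j * pauli i) ⊗ₖ proj1)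
            * (ρ ⊗ₖ projPlus)
            * ((pauli i * pauli j) ⊗ₖ proj0 + (pauli j * pauli i) ⊗ₖ proj1)ᴴ) := by
    intro i j
    have h : (star ((Real.sqrt (p i * p j) : ℝ) : ℂ)) * ((Real.sqrt (p i * p j) : ℝ) : ℂ)
        = ((p i * p j : ℝ) : ℂ) := by
      rw [Complex.star_def, Complex.conj_ofReal, ← Complex.ofReal_mul,
        Real.mul_self_sqrt (mul_nonneg (hp i) (hp j))]
    simp only [Kswitch, conjTranspose_smul, smul_mul_assoc, mul_smul_comm, smul_smul]
    rw [h]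
  simp only [hK, kron4, Fin.sum_univ_four]
  simp only [pauli, Matrix.cons_val_zero, Matrix.cons_val_one, Matrix.head_cons,
    Matrix.cons_val_two, Matrix.tail_cons, Matrix.cons_val_three]
  have h1 : (1 : Matrix (Fin 2) (Fin 2) ℂ) = !![1, 0; 0, 1] := by
    ext i j; fin_cases i <;> fin_cases j <;> simp [Matrix.one_apply]
  simp only [h1, PX, PY, PZ, Matrix.mul_fin_two]
  ext ⟨a, b⟩ ⟨c, d⟩
  simp only [projPlus, projMinus, Matrix.add_apply, Matrix.smul_apply,
    Matrix.kroneckerMap_apply, Matrix.mul_apply, Matrix.conjTranspose_apply,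
    Fin.sum_univ_two, smul_eq_mul]
  fin_cases a <;> fin_cases b <;> fin_cases c <;> fin_cases d <;>
    simp [Complex.ext_iff, pow_two] <;> first | exact ⟨trivial, trivial⟩ | (constructor <;> ring) | ring | trivial
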